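/- Let p_N be a trigonometric polynomial of degree at most N on ℝ (a finite linear combination of cos(kx) and sin(kx) for 0 ≤ k ≤ N) with real coefficients, extended to the complex plane. Then for any r > 0, the supremum of |p_N(z)| over the strip {z ∈ ℂ : |Im z| ≤ r} is at most e^{rN} times the supremum of |p_N(x)| over x ∈ ℝ. -/

import Mathlib

open Complex Finset

open scoped ComplexConjugate

/-!
Multiplied by `e^{iNz}`, the trigonometric polynomial `p` becomes a polynomial `q` in
`u = e^{iz}`. For `Im z ≥ 0` the point `u` lies in the closed unit disc, so the maximum modulus
principle bounds `|q(u)|` by its maximum on the unit circle, which is `sup_ℝ |p|`; hence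
`|p(z)| ≤ e^{N Im z} sup_ℝ |p|`. Since the coefficients are real, `p (conj z) = conj (p z)`,
which covers the lower half-plane.
-/

theorem norm_le_of_forall_norm_exp_mul_I_le {f : ℂ → ℂ} (hf : Differentiable ℂ f) {M : ℝ}
    (hM : ∀ θ : ℝ, ‖f (exp (θ * I))‖ ≤ M) {u : ℂ} (hu : ‖u‖ ≤ 1) : ‖f u‖ ≤ M := by
  refine norm_le_of_forall_mem_frontier_norm_le Metric.isBounded_ball hf.diffContOnCl ?_
    (by rwa [closure_ball _ one_ne_zero, mem_closedBall_zero_iff])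
  intro v hv
  rw [frontier_ball _ one_ne_zero, mem_sphere_zero_iff_norm, norm_eq_one_iff] at hv
  obtain ⟨θ, rfl⟩ := hv
  exact hM θ

noncomputable def trigPoly (N : ℕ) (a b : ℕ → ℝ) (z : ℂ) : ℂ :=
  a 0 + ∑ k ∈ Icc 1 N, (a k * cos (k * z) + b k * sin (k * z))

/-- `exp (N * z * I) * trigPoly N a b z` as a polynomial in `u = exp (z * I)`. -/
noncomputable def trigPolyLift (N : ℕ) (a b : ℕ → ℝ) (u : ℂ) : ℂ :=
  a 0 * u ^ N + ∑ k ∈ Icc 1 N,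
    (a k * (u ^ (N + k) + u ^ (N - k)) / 2 + b k * (u ^ (N - k) - u ^ (N + k)) * I / 2)

section

variable {N : ℕ} {a b : ℕ → ℝ} {M : ℝ}

theorem differentiable_trigPolyLift : Differentiable ℂ (trigPolyLift N a b) := by
  unfold trigPolyLift
  fun_prop

theorem trigPolyLift_exp_mul_I (z : ℂ) :
    trigPolyLift N a b (exp (z * I)) = exp (N * z * I) * trigPoly N a b z := by
  have hpow (m : ℕ) : exp (z * I) ^ m = exp (m * z * I) := by
    rw [← exp_nat_mul, mul_assoc]
  rw [trigPolyLift, trigPoly, mul_add, mul_sum, hpow, mul_comm (exp _)]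
  congr 1
  refine sum_congr rfl fun k hk => ?_
  have hkN : k ≤ N := (mem_Icc.mp hk).2
  have hneg : exp (-(k * z) * I) = (exp (z * I) ^ k)⁻¹ := by
    rw [neg_mul, exp_neg, hpow, mul_assoc]
  rw [cos, sin, hneg, ← hpow, ← hpow, pow_sub₀ _ (exp_ne_zero _) hkN, pow_add]
  field_simp

theorem trigPoly_conj (z : ℂ) : trigPoly N a b (conj z) = conj (trigPoly N a b z) := by
  simp only [trigPoly, map_add, map_sum, map_mul, conj_ofReal, conj_natCast,
    ← cos_conj, ← sin_conj]

theorem norm_trigPoly_ofReal_le (x : ℝ) :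
    ‖trigPoly N a b x‖ ≤ |a 0| + ∑ k ∈ Icc 1 N, (|a k| + |b k|) := by
  have hkx (k : ℕ) : (k * x : ℂ) = ((k * x : ℝ) : ℂ) := by push_cast; rfl
  refine (norm_add_le _ _).trans (add_le_add (norm_real _).le (norm_sum_le_of_le _ fun k _ => ?_))
  refine (norm_add_le _ _).trans (add_le_add ?_ ?_)
  · rw [norm_mul, hkx, ← ofReal_cos, norm_real, norm_real]
    exact mul_le_of_le_one_right (abs_nonneg _) (Real.abs_cos_le_one _)
  · rw [norm_mul, hkx, ← ofReal_sin, norm_real, norm_real]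
    exact mul_le_of_le_one_right (abs_nonneg _) (Real.abs_sin_le_one _)

theorem bddAbove_range_norm_trigPoly_ofReal :
    BddAbove (Set.range fun x : ℝ => ‖trigPoly N a b x‖) :=
  ⟨_, Set.forall_mem_range.mpr norm_trigPoly_ofReal_le⟩


theorem norm_trigPoly_le_of_im_nonneg (hM : ∀ x : ℝ, ‖trigPoly N a b x‖ ≤ M) {z : ℂ}
    (hz : 0 ≤ z.im) : ‖trigPoly N a b z‖ ≤ Real.exp (N * z.im) * M := by
  have hcircle (θ : ℝ) : ‖trigPolyLift N a b (exp (θ * I))‖ ≤ M := by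
    rw [trigPolyLift_exp_mul_I, norm_mul, ← ofReal_natCast, ← ofReal_mul,
      norm_exp_ofReal_mul_I, one_mul]
    exact hM θ
  have hdisc : ‖exp (z * I)‖ ≤ 1 := by
    simpa [norm_exp] using hz
  have h := norm_le_of_forall_norm_exp_mul_I_le differentiable_trigPolyLift hcircle hdisc
  rwa [trigPolyLift_exp_mul_I, norm_mul, norm_exp, show (N * z * I).re = -(N * z.im) by simp,
    Real.exp_neg, inv_mul_le_iff₀ (Real.exp_pos _)] at h

theorem norm_trigPoly_le (hM : ∀ x : ℝ, ‖trigPoly N a b x‖ ≤ M) (z : ℂ) :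
    ‖trigPoly N a b z‖ ≤ Real.exp (N * |z.im|) * M := by
  rcases le_total 0 z.im with hz | hz
  · rw [abs_of_nonneg hz]
    exact norm_trigPoly_le_of_im_nonneg hM hz
  · rw [abs_of_nonpos hz, ← conj_im, ← norm_conj, ← trigPoly_conj]
    exact norm_trigPoly_le_of_im_nonneg hM (by rw [conj_im]; linarith)

end

theorem trig_poly_strip_bound_general (N : ℕ) (a b : ℕ → ℝ)
    (P : ℂ → ℂ)
    (hP : ∀ z : ℂ, P z = (a 0 : ℂ) +
      ∑ k ∈ Finset.Icc 1 N, ((a k : ℂ) * Complex.cos (k * z) + (b k : ℂ) * Complex.sin (k * z)))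
    (r : ℝ) :
    ∀ z : ℂ, |z.im| ≤ r →
      ‖P z‖ ≤ Real.exp (r * N) * ⨆ x : ℝ, ‖P (x : ℂ)‖ := by
  obtain rfl : P = trigPoly N a b := funext hP
  intro z hz
  have hM (x : ℝ) : ‖trigPoly N a b x‖ ≤ ⨆ x : ℝ, ‖trigPoly N a b x‖ :=
    le_ciSup bddAbove_range_norm_trigPoly_ofReal x
  refine (norm_trigPoly_le hM z).trans
    (mul_le_mul_of_nonneg_right ?_ ((norm_nonneg _).trans (hM 0)))
  rw [mul_comm r]
  gcongr

/-- A real trigonometric polynomial of degree at most `N`, extended to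
the complex plane, satisfies `|p(z)| ≤ e^{rN} · sup_{x∈ℝ} |p(x)|` on the strip
`|Im z| ≤ r`. -/
theorem trig_poly_strip_bound (N : ℕ) (a b : ℕ → ℝ)
    (P : ℂ → ℂ)
    (hP : ∀ z : ℂ, P z = (a 0 : ℂ) +
      ∑ k ∈ Finset.Icc 1 N, ((a k : ℂ) * Complex.cos (k * z) + (b k : ℂ) * Complex.sin (k * z)))
    (r : ℝ) (hr : 0 < r) :
    ∀ z : ℂ, |z.im| ≤ r →
      ‖P z‖ ≤ Real.exp (r * N) * ⨆ x : ℝ, ‖P (x : ℂ)‖ :=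
  trig_poly_strip_bound_general N a b P hP r
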